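/- Let Λ be a partition of size rd admitting at least one standard r-rim hook tableau. Then for each divisor m of r, the number of boxes of Λ whose hook length is divisible by m equals (r/m)·d; equivalently, for each m | r, #{□ ∈ Λ : gcd(h(□), r) = m} = #{i ∈ [rd] : gcd(i, r) = m}. -/

import Mathlib

/-- A partition, given as a weakly decreasing, eventually-zero sequence of
row lengths (`f i` = length of the `i`-th row, 0-indexed). -/
def IsPartitionN (f : ℕ → ℕ) : Prop :=
  Antitone f ∧ ∃ N, ∀ i, N ≤ i → f i = 0

/-- `mu/lam` is a rim hook: nonempty, its nonempty rows are contiguous, and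
consecutive nonempty rows overlap in exactly one column, i.e. the skew shape
is edgewise connected and contains no `2×2` square. -/
def IsRimHookN (lam mu : ℕ → ℕ) : Prop :=
  (∀ i, lam i ≤ mu i) ∧ (∃ i, lam i < mu i) ∧
    (∀ i m j : ℕ, i ≤ m → m ≤ j → lam i < mu i → lam j < mu j → lam m < mu m) ∧
    ∀ i : ℕ, lam i < mu i → lam (i + 1) < mu (i + 1) → mu (i + 1) = lam i + 1

/-- The hook length of the box `p = (i,j)` (0-indexed) of the partition `f`:
arm `f i − j − 1`, plus leg `#{i' > i : f i' > j}`, plus one. -/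
noncomputable def hookLen (f : ℕ → ℕ) (p : ℕ × ℕ) : ℕ :=
  (f p.1 - p.2) + Set.ncard {i : ℕ | p.1 < i ∧ p.2 < f i}

/-!
Encode a partition `λ` with `λ_N = 0` by its bead set `B = {λ_i + N - i : i ≤ N}`. The boxes
of row `i` correspond to the non-beads `c` below the bead `x = λ_i + N - i`, with hook length
`x - c`. Hence the number of hook lengths divisible by `m` is
`∑_{x ∈ B} #{c < x : c ∉ B, c ≡ x [MOD m]}`, which equals
`∑_{x ∈ B} ⌊x / m⌋ - #{(y, x) ∈ B × B : y < x, y ≡ x [MOD m]}`.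
Adding a rim hook of size `r` moves a single bead from `b` to `b + r`. For `m ∣ r` this keeps
the residues of the beads mod `m`, so the pair count is unchanged while `∑ ⌊x / m⌋` grows by
`r / m`. Thus `(r / m) d` hook lengths are divisible by `m`, exactly as many as in `[1, rd]`,
and a downward induction over the divisors of `r` turns these counts into the gcd counts.
-/

open Finset

lemma image_range_eq_insert_erase {u v : ℕ → ℕ} {a b N : ℕ} (hu : Set.InjOn u (Set.Iic N))
    (hab : a ≤ b) (hbN : b ≤ N) (hout : ∀ i, i < a ∨ b < i → v i = u i)
    (hshift : ∀ i, a ≤ i → i < b → v (i + 1) = u i) :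
    (range (N + 1)).image v = insert (v a) (((range (N + 1)).image u).erase (u b)) := by
  have hne {i : ℕ} (hi : i ≤ N) (hib : i ≠ b) : u i ≠ u b := fun h => hib (hu hi hbN h)
  ext y
  simp only [mem_image, mem_range, Nat.lt_succ_iff, mem_insert, mem_erase]
  constructor
  · rintro ⟨i, hi, rfl⟩
    by_cases hout_i : i < a ∨ b < i
    · exact .inr ⟨hout i hout_i ▸ hne hi (by omega), i, hi, (hout i hout_i).symm⟩
    rcases eq_or_ne i a with rfl | hia
    · exact .inl rfl
    obtain ⟨i, rfl⟩ : ∃ i', i = i' + 1 := ⟨i - 1, by omega⟩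
    rw [hshift i (by omega) (by omega)]
    exact .inr ⟨hne (by omega) (by omega), i, by omega, rfl⟩
  · rintro (rfl | ⟨hyb, i, hi, rfl⟩)
    · exact ⟨a, by omega, rfl⟩
    by_cases hout_i : i < a ∨ b < i
    · exact ⟨i, hi, hout i hout_i⟩
    have hib : i ≠ b := fun h => hyb (h ▸ rfl)
    exact ⟨i + 1, by omega, hshift i (by omega) (by omega)⟩

lemma sum_Icc_sub_add_eq {lam mu : ℕ → ℕ} {a b : ℕ} (hle : ∀ i, lam i ≤ mu i)
    (hstep : ∀ i, a ≤ i → i < b → mu (i + 1) = lam i + 1) {k : ℕ} (hk : a + k ≤ b) :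
    ∑ i ∈ Icc a (a + k), (mu i - lam i) + lam (a + k) = mu a + k := by
  induction k with
  | zero => simp only [add_zero, Icc_self, sum_singleton, Nat.sub_add_cancel (hle a)]
  | succ k ih =>
    rw [← add_assoc, sum_Icc_succ_top (by omega)]
    have := ih (by omega)
    have := hle (a + k + 1)
    have := hstep (a + k) (by omega) (by omega)
    omega

namespace Abacus

def hookCount (m : ℕ) (B : Finset ℕ) : ℕ :=
  ∑ x ∈ B, #{c ∈ range x | c ∉ B ∧ c ≡ x [MOD m]}

lemma card_range_filter_modEq (m x : ℕ) : #{c ∈ range x | c ≡ x [MOD m]} = x / m := by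
  rw [← Nat.Ioc_filter_dvd_card_eq_div]
  refine card_nbij' (x - ·) (x - ·) ?_ ?_ ?_ ?_ <;> intro c hc <;>
    simp only [coe_filter, Set.mem_ofPred_eq, mem_range, mem_Ioc] at hc ⊢
  · exact ⟨by omega, (Nat.modEq_iff_dvd' hc.1.le).1 hc.2⟩
  · refine ⟨by omega, (Nat.modEq_iff_dvd' (by omega)).2 ?_⟩
    rw [Nat.sub_sub_self hc.1.2]
    exact hc.2
  · omega
  · omega

lemma hookCount_add_sum_card_lt (m : ℕ) (B : Finset ℕ) :
    hookCount m B + ∑ x ∈ B, #{y ∈ B | y < x ∧ y ≡ x [MOD m]} = ∑ x ∈ B, x / m := by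
  rw [hookCount, ← sum_add_distrib]
  refine sum_congr rfl fun x _ => ?_
  have hsplit := card_filter_add_card_filter_not (s := {c ∈ range x | c ≡ x [MOD m]}) (· ∈ B)
  rw [filter_filter, filter_filter] at hsplit
  rw [← card_range_filter_modEq, ← hsplit, add_comm]
  congr 2 <;> ext c <;> simp only [mem_filter, mem_range] <;> tauto

lemma two_mul_sum_card_lt (m : ℕ) (B : Finset ℕ) :
    2 * ∑ x ∈ B, #{y ∈ B | y < x ∧ y ≡ x [MOD m]} =
      ∑ x ∈ B, #{y ∈ B | y ≠ x ∧ y ≡ x [MOD m]} := by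
  have hsymm : ∑ x ∈ B, #{y ∈ B | x < y ∧ y ≡ x [MOD m]} =
      ∑ x ∈ B, #{y ∈ B | y < x ∧ y ≡ x [MOD m]} := by
    simp only [card_filter]
    rw [sum_comm]
    refine sum_congr rfl fun x _ => sum_congr rfl fun y _ => ?_
    simp only [Nat.ModEq.comm]
  rw [two_mul]
  nth_rw 2 [← hsymm]
  rw [← sum_add_distrib]
  refine sum_congr rfl fun x _ => ?_
  have hdisj :
      Disjoint {y ∈ B | y < x ∧ y ≡ x [MOD m]} {y ∈ B | x < y ∧ y ≡ x [MOD m]} :=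
    disjoint_filter.2 fun y _ h h' => by omega
  rw [← card_union_of_disjoint hdisj, ← filter_or]
  congr 1; ext y; simp only [mem_filter, ne_iff_lt_or_gt, or_and_right]

lemma sum_card_modEq_map {m : ℕ} (B : Finset ℕ) {σ : ℕ ≃ ℕ}
    (hσ : ∀ x, σ x ≡ x [MOD m]) :
    ∑ x ∈ B.map σ.toEmbedding, #{y ∈ B.map σ.toEmbedding | y ≠ x ∧ y ≡ x [MOD m]} =
      ∑ x ∈ B, #{y ∈ B | y ≠ x ∧ y ≡ x [MOD m]} := by
  rw [sum_map]
  refine sum_congr rfl fun x _ => ?_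
  rw [filter_map, card_map]
  congr 1; ext y
  simp only [mem_filter, Function.comp_apply, Equiv.coe_toEmbedding, ne_eq,
    σ.apply_eq_iff_eq]
  exact and_congr_right fun _ => and_congr_right fun _ =>
    ⟨fun h => ((hσ y).symm.trans h).trans (hσ x),
      fun h => ((hσ y).trans h).trans (hσ x).symm⟩

lemma insert_erase_eq_map_swap {B : Finset ℕ} {i j : ℕ} (hi : i ∈ B) (hj : j ∉ B) :
    insert j (B.erase i) = B.map (Equiv.swap i j).toEmbedding := by
  apply coe_injective
  rw [coe_map, Equiv.coe_toEmbedding, Equiv.image_swap_of_mem_of_notMem hi hj, coe_insert,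
    coe_erase, Set.insert_sdiff_of_notMem _
      (Set.notMem_singleton_iff.2 (ne_of_mem_of_not_mem hi hj).symm)]

lemma sum_div_insert_erase {m r b : ℕ} {B : Finset ℕ} (hmr : m ∣ r) (hb : b ∈ B)
    (hbr : b + r ∉ B) :
    ∑ x ∈ insert (b + r) (B.erase b), x / m = ∑ x ∈ B, x / m + r / m := by
  rw [sum_insert fun h => hbr (mem_of_mem_erase h), Nat.add_div_of_dvd_left hmr,
    ← add_sum_erase B _ hb]
  ring

lemma hookCount_insert_erase {m r b : ℕ} {B : Finset ℕ} (hmr : m ∣ r) (hb : b ∈ B)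
    (hbr : b + r ∉ B) : hookCount m (insert (b + r) (B.erase b)) = hookCount m B + r / m := by
  have hmod : b + r ≡ b [MOD m] := Nat.add_modEq_left_iff.2 hmr
  have hpairs := sum_card_modEq_map (m := m) B (σ := Equiv.swap b (b + r)) fun x => by
    rcases eq_or_ne x b with rfl | hxb
    · simpa using hmod
    rcases eq_or_ne x (b + r) with rfl | hxbr
    · simpa using hmod.symm
    · rw [Equiv.swap_apply_of_ne_of_ne hxb hxbr]
  rw [← insert_erase_eq_map_swap hb hbr] at hpairs
  have h₁ := hookCount_add_sum_card_lt m B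
  have h₂ := hookCount_add_sum_card_lt m (insert (b + r) (B.erase b))
  have h₃ := two_mul_sum_card_lt m B
  have h₄ := two_mul_sum_card_lt m (insert (b + r) (B.erase b))
  have h₅ := sum_div_insert_erase hmr hb hbr
  omega

/-- Beads of the rows `0, …, N`; row `N` is empty, so `0` is always a bead. -/
def bead (f : ℕ → ℕ) (N i : ℕ) : ℕ := f i + (N - i)

def beadSet (f : ℕ → ℕ) (N : ℕ) : Finset ℕ := (range (N + 1)).image (bead f N)

def colLen (f : ℕ → ℕ) (N j : ℕ) : ℕ := #{i ∈ range N | j < f i}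

/-- `bead f N i - hookLen f (i, j)` does not depend on the row `i`: the positions `gap f N j`
are exactly the non-beads. -/
def gap (f : ℕ → ℕ) (N j : ℕ) : ℕ := j + 1 + N - colLen f N j

def boxes (f : ℕ → ℕ) (N : ℕ) : Finset (ℕ × ℕ) :=
  (range N).biUnion fun i => (range (f i)).map ⟨(i, ·), Prod.mk_right_injective i⟩

variable {f : ℕ → ℕ} {N : ℕ}

lemma card_filter_boxes (P : ℕ × ℕ → Prop) [DecidablePred P] :
    #{p ∈ boxes f N | P p} = ∑ i ∈ range N, #{j ∈ range (f i) | P (i, j)} := by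
  rw [boxes, filter_biUnion, card_biUnion]
  · simp only [filter_map, card_map]
    rfl
  · intro i _ i' _ hii'
    simp only [Function.onFun, disjoint_left, mem_filter, mem_map]
    rintro _ ⟨⟨j, _, rfl⟩, _⟩ ⟨⟨j', _, h⟩, _⟩
    exact hii' (congrArg Prod.fst h).symm

lemma coe_filter_boxes (hN : ∀ i, N ≤ i → f i = 0) (P : ℕ × ℕ → Prop) [DecidablePred P] :
    ↑{p ∈ boxes f N | P p} = {p : ℕ × ℕ | p.2 < f p.1 ∧ P p} := by
  ext ⟨i, j⟩
  simp only [boxes, coe_filter, mem_biUnion, mem_range, mem_map, Function.Embedding.coeFn_mk,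
    Prod.mk.injEq, Set.mem_ofPred_eq]
  constructor
  · rintro ⟨⟨i, -, j, hj, rfl, rfl⟩, hP⟩
    exact ⟨hj, hP⟩
  · rintro ⟨hj, hP⟩
    refine ⟨⟨i, ?_, j, hj, rfl, rfl⟩, hP⟩
    by_contra! h
    rw [hN i h] at hj
    omega

lemma bead_strictAntiOn (hf : Antitone f) : StrictAntiOn (bead f N) (Set.Iic N) :=
  fun i _ i' hi' hii' => by
    have := hf hii'.le
    simp only [bead, Set.mem_Iic] at hi' ⊢
    omega

lemma mem_beadSet {x : ℕ} : x ∈ beadSet f N ↔ ∃ i ≤ N, bead f N i = x := by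
  simp only [beadSet, mem_image, mem_range, Nat.lt_succ_iff]

lemma colLen_le (j : ℕ) : colLen f N j ≤ N :=
  (card_filter_le _ _).trans (card_range N).le

lemma gap_strictMono : StrictMono (gap f N) := by
  refine strictMono_nat_of_lt_succ fun j => ?_
  have hcol : colLen f N (j + 1) ≤ colLen f N j :=
    card_le_card <| monotone_filter_right _ fun i h => by omega
  have := colLen_le (f := f) (N := N) j
  simp only [gap]
  omega

lemma card_filter_mem_beadSet (hf : Antitone f) {i : ℕ} (hi : i ≤ N) :
    #{c ∈ range (bead f N i) | c ∈ beadSet f N} = N - i := by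
  have hanti := bead_strictAntiOn (N := N) hf
  have hbelow : {c ∈ range (bead f N i) | c ∈ beadSet f N} = (Ioc i N).image (bead f N) := by
    ext c
    simp only [mem_filter, mem_range, mem_beadSet, mem_image, mem_Ioc]
    constructor
    · rintro ⟨hc, i', hi', rfl⟩
      exact ⟨i', ⟨(hanti.lt_iff_gt hi' hi).1 hc, hi'⟩, rfl⟩
    · rintro ⟨i', ⟨hii', hi'⟩, rfl⟩
      exact ⟨(hanti.lt_iff_gt hi' hi).2 hii', i', hi', rfl⟩
  rw [hbelow, card_image_of_injOn (hanti.injOn.mono fun i' h => (mem_Ioc.1 h).2), Nat.card_Ioc]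

section

variable (hf : Antitone f) (hN : ∀ i, N ≤ i → f i = 0)
include hf hN

lemma lt_colLen_iff {i j : ℕ} : i < colLen f N j ↔ j < f i := by
  constructor
  · intro hi
    by_contra! hfi
    have : colLen f N j ≤ i := by
      refine (card_le_card fun i' hi' => ?_).trans (card_range i).le
      simp only [mem_filter, mem_range] at hi' ⊢
      by_contra! h
      exact absurd (hf h) (by omega)
    omega
  · intro hj
    have hiN : i < N := by
      by_contra! h
      rw [hN i h] at hj
      omega
    calc i < #(range (i + 1)) := by rw [card_range]; omega
      _ ≤ colLen f N j := card_le_card fun i' hi' => by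
        simp only [mem_filter, mem_range] at hi' ⊢
        exact ⟨by omega, hj.trans_le (hf (by omega))⟩

lemma hookLen_add_gap {i j : ℕ} (hj : j < f i) : hookLen f (i, j) + gap f N j = bead f N i := by
  have hleg : {i' | i < i' ∧ j < f i'} = ↑(Ioo i (colLen f N j)) := by
    ext i'
    simp [lt_colLen_iff hf hN]
  have hi := (lt_colLen_iff hf hN).2 hj
  have := colLen_le (f := f) (N := N) j
  rw [hookLen, hleg, Set.ncard_coe_finset, Nat.card_Ioo, gap, bead]
  dsimp only
  omega

lemma gap_lt_bead_iff {i j : ℕ} : gap f N j < bead f N i ↔ j < f i := by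
  have := colLen_le (f := f) (N := N) j
  have := (lt_colLen_iff hf hN (i := i) (j := j))
  simp only [gap, bead]
  omega

lemma gap_notMem_beadSet (j : ℕ) : gap f N j ∉ beadSet f N := by
  rw [mem_beadSet]
  rintro ⟨i, -, hi⟩
  have := colLen_le (f := f) (N := N) j
  have := (lt_colLen_iff hf hN (i := i) (j := j))
  simp only [gap, bead] at hi
  omega

lemma image_gap_range {i : ℕ} (hi : i ≤ N) :
    (range (f i)).image (gap f N) = {c ∈ range (bead f N i) | c ∉ beadSet f N} := by
  refine eq_of_subset_of_card_le (fun c hc => ?_) ?_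
  · obtain ⟨j, hj, rfl⟩ := mem_image.1 hc
    exact mem_filter.2 ⟨mem_range.2 ((gap_lt_bead_iff hf hN).2 (mem_range.1 hj)),
      gap_notMem_beadSet hf hN j⟩
  · have hsplit := card_filter_add_card_filter_not (s := range (bead f N i)) (· ∈ beadSet f N)
    rw [card_filter_mem_beadSet hf hi, card_range] at hsplit
    rw [card_image_of_injective _ gap_strictMono.injective, card_range]
    have : bead f N i = f i + (N - i) := rfl
    omega

lemma card_filter_dvd_hookLen_row (m : ℕ) {i : ℕ} (hi : i ≤ N) :
    #{j ∈ range (f i) | m ∣ hookLen f (i, j)} =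
      #{c ∈ range (bead f N i) | c ∉ beadSet f N ∧ c ≡ bead f N i [MOD m]} := by
  rw [← filter_filter, ← image_gap_range hf hN hi, filter_image,
    card_image_of_injective _ gap_strictMono.injective]
  congr 1
  refine filter_congr fun j hj => ?_
  have hsum := hookLen_add_gap hf hN (mem_range.1 hj)
  rw [Nat.modEq_iff_dvd' (by omega), ← hsum, Nat.add_sub_cancel]

lemma ncard_dvd_hookLen_eq_hookCount (m : ℕ) :
    {p : ℕ × ℕ | p.2 < f p.1 ∧ m ∣ hookLen f p}.ncard = hookCount m (beadSet f N) := by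
  rw [← coe_filter_boxes (N := N + 1) fun i hi => hN i (by omega), Set.ncard_coe_finset,
    card_filter_boxes, hookCount, beadSet,
    sum_image ((bead_strictAntiOn hf).injOn.mono fun i hi => Nat.lt_succ_iff.1 (mem_range.1 hi))]
  exact sum_congr rfl fun i hi =>
    card_filter_dvd_hookLen_row hf hN m (Nat.lt_succ_iff.1 (mem_range.1 hi))

end

end Abacus

open Abacus

lemma IsRimHookN.exists_rows {lam mu : ℕ → ℕ} (h : IsRimHookN lam mu) {N : ℕ}
    (hN : ∀ i, N ≤ i → mu i = 0) :
    ∃ a b, a ≤ b ∧ b < N ∧ lam a < mu a ∧ (∀ i, i < a ∨ b < i → mu i = lam i) ∧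
      ∀ i, a ≤ i → i < b → mu (i + 1) = lam i + 1 := by
  obtain ⟨hle, ⟨i₀, hi₀⟩, hconv, hstep⟩ := h
  set S := {i ∈ range N | lam i < mu i}
  have hmemS {i : ℕ} (hi : lam i < mu i) : i ∈ S := by
    refine mem_filter.2 ⟨mem_range.2 ?_, hi⟩
    by_contra! hiN
    rw [hN i hiN] at hi
    omega
  have hS : S.Nonempty := ⟨i₀, hmemS hi₀⟩
  have ha := mem_filter.1 (S.min'_mem hS)
  have hb := mem_filter.1 (S.max'_mem hS)
  refine ⟨S.min' hS, S.max' hS, S.min'_le _ (S.max'_mem hS), mem_range.1 hb.1, ha.2,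
    fun i hi => ?_, fun i hai hib => hstep i (hconv _ _ _ hai (by omega) ha.2 hb.2)
      (hconv _ _ _ (by omega) (by omega) ha.2 hb.2)⟩
  by_contra hne
  have hiS := hmemS (lt_of_le_of_ne (hle i) (Ne.symm hne))
  rcases hi with hi | hi
  · exact absurd (S.min'_le i hiS) (by omega)
  · exact absurd (S.le_max' i hiS) (by omega)

lemma IsRimHookN.beadSet_eq {lam mu : ℕ → ℕ} (hlam : Antitone lam) (hmu : Antitone mu)
    (h : IsRimHookN lam mu) {N : ℕ} (hN : ∀ i, N ≤ i → mu i = 0) :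
    ∃ x ∈ beadSet lam N, x + ∑ᶠ i, (mu i - lam i) ∉ beadSet lam N ∧
      beadSet mu N = insert (x + ∑ᶠ i, (mu i - lam i)) ((beadSet lam N).erase x) := by
  obtain ⟨a, b, hab, hbN, ha, hout, hstep⟩ := h.exists_rows hN
  have hsupp : Function.support (fun i => mu i - lam i) ⊆ ↑(Icc a b) := fun i hi => by
    by_contra hiab
    simp only [coe_Icc, Set.mem_Icc, not_and_or, not_le] at hiab
    exact hi (by simp only [hout i hiab, Nat.sub_self])
  have hsize : bead lam N b + ∑ᶠ i, (mu i - lam i) = bead mu N a := by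
    have := sum_Icc_sub_add_eq h.1 hstep (k := b - a) (by omega)
    rw [Nat.add_sub_cancel' hab] at this
    rw [finsum_eq_sum_of_support_subset _ hsupp, bead, bead]
    omega
  refine ⟨bead lam N b, mem_beadSet.2 ⟨b, hbN.le, rfl⟩, hsize ▸ ?_, hsize ▸ ?_⟩
  · rw [mem_beadSet]
    rintro ⟨i, hi, heq⟩
    rcases lt_or_ge i a with hia | hia
    · have := bead_strictAntiOn hmu (Set.mem_Iic.2 hi) (Set.mem_Iic.2 (by omega : a ≤ N)) hia
      simp only [bead, hout i (.inl hia)] at this heq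
      omega
    · have := hlam hia
      simp only [bead] at heq
      omega
  · refine image_range_eq_insert_erase (bead_strictAntiOn hlam).injOn hab hbN.le
      (fun i hi => by simp only [bead, hout i hi]) (fun i hai hib => ?_)
    simp only [bead, hstep i hai hib]
    omega

lemma IsRimHookN.ncard_dvd_hookLen {lam mu : ℕ → ℕ} (hlam : IsPartitionN lam)
    (hmu : IsPartitionN mu) (h : IsRimHookN lam mu) {m : ℕ} (hm : m ∣ ∑ᶠ i, (mu i - lam i)) :
    {p : ℕ × ℕ | p.2 < mu p.1 ∧ m ∣ hookLen mu p}.ncard =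
      {p : ℕ × ℕ | p.2 < lam p.1 ∧ m ∣ hookLen lam p}.ncard + (∑ᶠ i, (mu i - lam i)) / m := by
  obtain ⟨hmu, N, hN⟩ := hmu
  have hNlam (i : ℕ) (hi : N ≤ i) : lam i = 0 := Nat.eq_zero_of_le_zero (hN i hi ▸ h.1 i)
  obtain ⟨x, hx, hxs, hset⟩ := h.beadSet_eq hlam.1 hmu hN
  rw [ncard_dvd_hookLen_eq_hookCount hmu hN, ncard_dvd_hookLen_eq_hookCount hlam.1 hNlam, hset,
    hookCount_insert_erase hm hx hxs]

lemma ncard_dvd_hookLen_of_rimHookTableau {r d : ℕ} {ν : Fin (d + 1) → ℕ → ℕ}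
    (hν : ∀ t, IsPartitionN (ν t)) (hν0 : ν 0 = fun _ => 0)
    (hstep : ∀ t : Fin d, IsRimHookN (ν t.castSucc) (ν t.succ) ∧
      ∑ᶠ i, (ν t.succ i - ν t.castSucc i) = r) {m : ℕ} (hm : m ∣ r) (t : Fin (d + 1)) :
    {p : ℕ × ℕ | p.2 < ν t p.1 ∧ m ∣ hookLen (ν t) p}.ncard = r / m * t := by
  induction t using Fin.induction with
  | zero => simp [hν0]
  | succ t ih =>
    obtain ⟨hrh, hsize⟩ := hstep t
    rw [hrh.ncard_dvd_hookLen (hν _) (hν _) (hsize ▸ hm), ih, hsize, Fin.val_succ,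
      Fin.val_castSucc]
    ring

lemma card_filter_dvd_eq_sum_card_filter_gcd {ι : Type*} (s : Finset ι) (g : ι → ℕ) {r m : ℕ}
    (hr : r ≠ 0) (hm : m ∣ r) :
    #{x ∈ s | m ∣ g x} = ∑ j ∈ r.divisors with m ∣ j, #{x ∈ s | (g x).gcd r = j} := by
  rw [card_eq_sum_card_fiberwise (f := fun x => (g x).gcd r) fun x hx =>
    mem_filter.2 ⟨Nat.mem_divisors.2 ⟨Nat.gcd_dvd_right _ _, hr⟩,
      Nat.dvd_gcd (mem_filter.1 hx).2 hm⟩]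
  refine sum_congr rfl fun j hj => ?_
  rw [filter_filter]
  congr 1
  refine filter_congr fun x _ => and_iff_right_of_imp fun hx => ?_
  exact (mem_filter.1 hj).2.trans (hx ▸ Nat.gcd_dvd_left _ _)

lemma card_filter_gcd_eq_of_card_filter_dvd_eq {ι κ : Type*} (s : Finset ι) (t : Finset κ)
    (g : ι → ℕ) (g' : κ → ℕ) {r : ℕ} (hr : r ≠ 0)
    (h : ∀ k, k ∣ r → #{x ∈ s | k ∣ g x} = #{y ∈ t | k ∣ g' y}) {m : ℕ} (hm : m ∣ r) :
    #{x ∈ s | (g x).gcd r = m} = #{y ∈ t | (g' y).gcd r = m} := by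
  induction hn : r - m using Nat.strong_induction_on generalizing m with
  | _ n ih =>
    have hmem : m ∈ r.divisors.filter (m ∣ ·) :=
      mem_filter.2 ⟨Nat.mem_divisors.2 ⟨hm, hr⟩, dvd_rfl⟩
    have hlarger : ∑ j ∈ (r.divisors.filter (m ∣ ·)).erase m, #{x ∈ s | (g x).gcd r = j} =
        ∑ j ∈ (r.divisors.filter (m ∣ ·)).erase m, #{y ∈ t | (g' y).gcd r = j} := by
      refine sum_congr rfl fun j hj => ?_
      obtain ⟨hjm, hj⟩ := mem_erase.1 hj
      obtain ⟨⟨hjr, -⟩, hmj⟩ := (mem_filter.1 hj).imp_left Nat.mem_divisors.1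
      have := Nat.le_of_dvd (Nat.pos_of_ne_zero hr) hjr
      have := Nat.le_of_dvd (Nat.pos_of_dvd_of_pos hjr (Nat.pos_of_ne_zero hr)) hmj
      exact ih (r - j) (by omega) hjr rfl
    have hsum := h m hm
    rw [card_filter_dvd_eq_sum_card_filter_gcd s g hr hm,
      card_filter_dvd_eq_sum_card_filter_gcd t g' hr hm, ← add_sum_erase _ _ hmem,
      ← add_sum_erase _ _ hmem, hlarger] at hsum
    omega

theorem stmt17_general (r d : ℕ) (hr : 1 ≤ r) (Λ : ℕ → ℕ)
    (htab : ∃ ν : Fin (d + 1) → ℕ → ℕ,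
        (∀ t, IsPartitionN (ν t)) ∧ ν 0 = (fun _ => 0) ∧ ν (Fin.last d) = Λ ∧
          ∀ t : Fin d, IsRimHookN (ν t.castSucc) (ν t.succ) ∧
            (∑ᶠ i, (ν t.succ i - ν t.castSucc i)) = r)
    (m : ℕ) (hm : m ∣ r) :
    Set.ncard {p : ℕ × ℕ | p.2 < Λ p.1 ∧ m ∣ hookLen Λ p} = (r / m) * d ∧
      Set.ncard {p : ℕ × ℕ | p.2 < Λ p.1 ∧ Nat.gcd (hookLen Λ p) r = m} =
        ((Finset.Icc 1 (r * d)).filter fun i => Nat.gcd i r = m).card := by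
  obtain ⟨ν, hν, hν0, hνlast, hstep⟩ := htab
  have hdvd (k : ℕ) (hk : k ∣ r) :
      {p : ℕ × ℕ | p.2 < Λ p.1 ∧ k ∣ hookLen Λ p}.ncard = r / k * d := by
    simpa [hνlast] using ncard_dvd_hookLen_of_rimHookTableau hν hν0 hstep hk (Fin.last d)
  refine ⟨hdvd m hm, ?_⟩
  obtain ⟨-, N, hN⟩ := hνlast ▸ hν (Fin.last d)
  rw [← coe_filter_boxes hN, Set.ncard_coe_finset]
  refine card_filter_gcd_eq_of_card_filter_dvd_eq _ _ _ (fun i => i) (by omega) (fun k hk => ?_) hm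
  rw [← Set.ncard_coe_finset, coe_filter_boxes hN, hdvd k hk, ← Nat.mul_div_right_comm hk]
  exact (Nat.Ioc_filter_dvd_card_eq_div (r * d) k).symm

/-- If a partition `Λ` of size `rd` admits a standard `r`-rim hook tableau,
then for each divisor `m` of `r`, the number of boxes of `Λ` with hook length
divisible by `m` is `(r/m)·d`; equivalently
`#{□ ∈ Λ : gcd(h(□),r) = m} = #{i ∈ [rd] : gcd(i,r) = m}`. -/
theorem stmt17 (r d : ℕ) (hr : 1 ≤ r) (Λ : ℕ → ℕ) (hΛ : IsPartitionN Λ)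
    (hsize : ∑ᶠ i, Λ i = r * d)
    (htab : ∃ ν : Fin (d + 1) → ℕ → ℕ,
        (∀ t, IsPartitionN (ν t)) ∧ ν 0 = (fun _ => 0) ∧ ν (Fin.last d) = Λ ∧
          ∀ t : Fin d, IsRimHookN (ν t.castSucc) (ν t.succ) ∧
            (∑ᶠ i, (ν t.succ i - ν t.castSucc i)) = r)
    (m : ℕ) (hm : m ∣ r) :
    Set.ncard {p : ℕ × ℕ | p.2 < Λ p.1 ∧ m ∣ hookLen Λ p} = (r / m) * d ∧
      Set.ncard {p : ℕ × ℕ | p.2 < Λ p.1 ∧ Nat.gcd (hookLen Λ p) r = m} =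
        ((Finset.Icc 1 (r * d)).filter fun i => Nat.gcd i r = m).card :=
  stmt17_general r d hr Λ htab m hm
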